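/- Let s be a primitive string of length n ≥ 2 over Σ and let π be a local ordering family (of order 1). For a row index i of M*(s), let x2 = F[i] be the first symbol of row i, x1 = L[i] its last symbol, and r = #{ j : j ≤ i, j ∈ Rng(x2), and L[j] = x1 }. Then the right cyclic shift of row i (its last symbol moved to the front) is exactly row number b + r − 1 of M*(s), where b = min Rng(x1x2). -/

import Mathlib

/-- The cyclic rotation of `s` by `r`: `s[r+1..n] s[1..r]`. -/
def rot {α : Type*} (s : List α) (r : ℕ) : List α := s.drop r ++ s.take r

/-- A string is primitive if its cyclic rotations are pairwise distinct. -/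
def IsPrimitive {α : Type*} (s : List α) : Prop :=
  ∀ r₁ r₂ : ℕ, r₁ < s.length → r₂ < s.length → rot s r₁ = rot s r₂ → r₁ = r₂

/-- The context adaptive order induced by a family `π` of linear orders on the
alphabet, one for each string (context): `u ≺ v` iff, `x = u[1..k] = v[1..k]`
being the longest common prefix of `u` and `v`, the symbol `u[k+1]` is
`π x`-smaller than `v[k+1]`. -/
def caLt {α : Type*} (π : List α → LinearOrder α) (u v : List α) : Prop :=
  ∃ (k : ℕ) (hu : k < u.length) (hv : k < v.length),
    u.take k = v.take k ∧ (π (u.take k)).lt (u.get ⟨k, hu⟩) (v.get ⟨k, hv⟩)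

/-- The matrix `M*(s)`: an enumeration of the cyclic rotations of `s`
listed in `≺`-increasing order; the `i`-th row is `row i`. -/
structure SortedRotMatrix {α : Type*} (π : List α → LinearOrder α) (s : List α) where
  row : Fin s.length → List α
  row_is_rot : ∀ i, ∃ r : Fin s.length, row i = rot s (r : ℕ)
  rot_is_row : ∀ r : Fin s.length, ∃ i, row i = rot s (r : ℕ)
  sorted : ∀ i j : Fin s.length, i < j → caLt π (row i) (row j)

/-- `Rng M x`: the set of row indices of `M*(s)` whose row has `x` as a prefix. -/
def Rng {α : Type*} [DecidableEq α] {π : List α → LinearOrder α} {s : List α}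
    (M : SortedRotMatrix π s) (x : List α) : Finset (Fin s.length) :=
  Finset.univ.filter (fun i => x <+: M.row i)

/-- `π` is a local ordering family (of order 1): the order `π x` depends only on
the last symbol of `x` (for nonempty `x`). -/
def IsLocalOrdering {α : Type*} (π : List α → LinearOrder α) : Prop :=
  ∀ x y : List α, x ≠ [] → y ≠ [] → x.getLast? = y.getLast? →
    ∀ a b : α, (π x).lt a b ↔ (π y).lt a b

/-- The right cyclic shift of `w`: its last symbol moved to the front. -/
def rshift {α : Type*} (w : List α) : List α := rot w (w.length - 1)

/-! Write row `i` as `x₂ v x₁`; its right shift `x₁ x₂ v` is again a row, reached by the LF-map.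
Two rows `x₂ v x₁` and `x₂ v' x₁` first differ inside `v`, `v'`, at a position whose context
starts with `x₂`; after prepending `x₁` the context only gains a symbol in front, so for a local
ordering the comparison is unchanged. Hence the LF-map is a strictly monotone bijection from the
rows of the form `x₂ ⋯ x₁` onto `Rng(x₁x₂)`, and `Rng(x₁x₂)` is an interval of rows: the image
of `i` lies as many places after `min Rng(x₁x₂)` as there are rows `x₂ ⋯ x₁` up to `i`. -/

section CaLt

variable {α : Type*} {π : List α → LinearOrder α}

theorem caLt_congr {π' : List α → LinearOrder α}
    (h : ∀ x a b, (π x).lt a b ↔ (π' x).lt a b) {u v : List α} :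
    caLt π u v ↔ caLt π' u v := by
  simp only [caLt, h]

@[simp]
theorem not_caLt_nil_left (v : List α) : ¬ caLt π [] v := by
  rintro ⟨k, hk, -⟩
  exact Nat.not_lt_zero k hk

@[simp]
theorem not_caLt_nil_right (u : List α) : ¬ caLt π u [] := by
  rintro ⟨k, -, hk, -⟩
  exact Nat.not_lt_zero k hk

theorem caLt_cons_cons {a b : α} {u v : List α} :
    caLt π (a :: u) (b :: v) ↔
      (π []).lt a b ∨ a = b ∧ caLt (fun x => π (a :: x)) u v := by
  constructor
  · rintro ⟨_ | k, hu, hv, htake, hlt⟩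
    · exact Or.inl hlt
    · simp only [List.take_succ_cons, List.cons.injEq] at htake
      rw [List.take_succ_cons] at hlt
      exact Or.inr ⟨htake.1, k, by simpa using hu, by simpa using hv, htake.2, hlt⟩
  · rintro (hlt | ⟨rfl, k, hu, hv, htake, hlt⟩)
    · exact ⟨0, by simp, by simp, rfl, hlt⟩
    · refine ⟨k + 1, by simpa using hu, by simpa using hv, by simp [htake], ?_⟩
      rw [List.take_succ_cons]
      exact hlt

theorem caLt_asymm {u v : List α} (huv : caLt π u v) (hvu : caLt π v u) : False := by
  induction u generalizing v π with
  | nil => simp at huv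
  | cons a u ih =>
    obtain _ | ⟨b, v⟩ := v
    · simp at huv
    let := π []
    rcases caLt_cons_cons.1 huv with hab | ⟨rfl, huv'⟩ <;>
      rcases caLt_cons_cons.1 hvu with hba | ⟨hba, hvu'⟩
    · exact lt_asymm hab hba
    · exact lt_irrefl a (hba ▸ hab)
    · exact lt_irrefl a hba
    · exact ih huv' hvu'

theorem caLt_of_append_singleton {u v : List α} {z : α} (hlen : u.length = v.length)
    (h : caLt π (u ++ [z]) (v ++ [z])) : caLt π u v := by
  induction u generalizing v π with
  | nil =>
    obtain rfl : v = [] := List.length_eq_zero_iff.1 hlen.symm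
    let := π []
    rcases caLt_cons_cons.1 h with hzz | ⟨-, h⟩
    · exact absurd hzz (lt_irrefl z)
    · simp at h
  | cons a u ih =>
    obtain _ | ⟨b, v⟩ := v
    · simp at hlen
    simp only [List.cons_append] at h
    rcases caLt_cons_cons.1 h with hab | ⟨rfl, htail⟩
    · exact caLt_cons_cons.2 (Or.inl hab)
    · exact caLt_cons_cons.2 (Or.inr ⟨rfl, ih (by simpa using hlen) htail⟩)

theorem List.IsPrefix.of_caLt_of_caLt {p u v w : List α} (hu : p <+: u) (hw : p <+: w)
    (hv : p.length ≤ v.length) (huv : caLt π u v) (hvw : caLt π v w) : p <+: v := by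
  induction p generalizing u v w π with
  | nil => exact List.nil_prefix
  | cons a p ih =>
    obtain _ | ⟨b, u⟩ := u
    · simp at hu
    obtain _ | ⟨c, v⟩ := v
    · simp at hv
    obtain _ | ⟨d, w⟩ := w
    · simp at hw
    rw [List.cons_prefix_cons] at hu hw ⊢
    obtain ⟨rfl, hu⟩ := hu
    obtain ⟨rfl, hw⟩ := hw
    let := π []
    rcases caLt_cons_cons.1 huv with hac | ⟨rfl, huv'⟩ <;>
      rcases caLt_cons_cons.1 hvw with hca | ⟨hca, hvw'⟩
    · exact absurd hca (lt_asymm hac)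
    · exact absurd (hca ▸ hac) (lt_irrefl a)
    · exact absurd hca (lt_irrefl a)
    · exact ⟨rfl, ih hu hw (by simpa using hv) huv' hvw'⟩

theorem IsLocalOrdering.caLt_cons (hloc : IsLocalOrdering π) {a c : α}
    {u v : List α} (h : caLt π (a :: u) (a :: v)) : caLt π (c :: a :: u) (c :: a :: v) := by
  rcases caLt_cons_cons.1 h with haa | ⟨-, htail⟩
  · let := π []
    exact absurd haa (lt_irrefl a)
  refine caLt_cons_cons.2 (Or.inr ⟨rfl, caLt_cons_cons.2 (Or.inr ⟨rfl, ?_⟩)⟩)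
  exact (caLt_congr fun x => hloc _ _ (by simp) (by simp) (by simp)).1 htail

end CaLt

theorem List.singleton_prefix_and_getLast?_iff {α : Type*} {w : List α} {a b : α}
    (hw : 2 ≤ w.length) : [a] <+: w ∧ w.getLast? = some b ↔ ∃ v, w = a :: v ++ [b] := by
  constructor
  · rintro ⟨⟨t, rfl⟩, hlast⟩
    rcases List.eq_nil_or_concat' t with rfl | ⟨v, z, rfl⟩
    · simp at hw
    · rw [← List.append_assoc, List.getLast?_concat, Option.some_inj] at hlast
      exact ⟨v, by rw [hlast]; rfl⟩
  · rintro ⟨v, rfl⟩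
    exact ⟨⟨_, rfl⟩, List.getLast?_concat⟩

section Rotation

variable {α : Type*}

theorem rshift_eq_rotate (w : List α) : rshift w = w.rotate (w.length - 1) :=
  (List.rotate_eq_drop_append_take (by omega)).symm

@[simp]
theorem rshift_append_singleton (w : List α) (z : α) : rshift (w ++ [z]) = z :: w := by
  simp [rshift, rot]

theorem eq_append_singleton_of_rshift_eq_cons {u v : List α} {a : α}
    (h : rshift u = a :: v) : u = v ++ [a] := by
  rcases List.eq_nil_or_concat' u with rfl | ⟨w, z, rfl⟩
  · simp [rshift, rot] at h
  · simp only [rshift_append_singleton, List.cons.injEq] at h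
    rw [h.1, h.2]

theorem rshift_rotate (l : List α) (r : ℕ) :
    rshift (l.rotate r) = l.rotate (r + (l.length - 1)) := by
  rw [rshift_eq_rotate, List.rotate_rotate, List.length_rotate]

theorem rshift_rotate_succ {l : List α} (hl : l ≠ []) (r : ℕ) :
    rshift (l.rotate (r + 1)) = l.rotate r := by
  have : r + 1 + (l.length - 1) = r + l.length := by
    have := List.length_pos_of_ne_nil hl
    omega
  rw [rshift_rotate, this, ← List.rotate_rotate, ← List.length_rotate l r, List.rotate_length]

end Rotation

namespace SortedRotMatrix

variable {α : Type*} {π : List α → LinearOrder α} {s : List α} (M : SortedRotMatrix π s)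

theorem exists_rotate_eq_row (i : Fin s.length) : ∃ r, M.row i = s.rotate r := by
  obtain ⟨r, hr⟩ := M.row_is_rot i
  exact ⟨r, hr.trans (List.rotate_eq_drop_append_take r.isLt.le).symm⟩

theorem exists_row_eq_rotate (hs : s ≠ []) (r : ℕ) : ∃ j, M.row j = s.rotate r := by
  have hr : r % s.length < s.length := Nat.mod_lt _ (List.length_pos_of_ne_nil hs)
  obtain ⟨j, hj⟩ := M.rot_is_row ⟨r % s.length, hr⟩
  refine ⟨j, hj.trans ?_⟩
  rw [← List.rotate_mod s r, List.rotate_eq_drop_append_take hr.le]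
  rfl

theorem length_row (i : Fin s.length) : (M.row i).length = s.length := by
  obtain ⟨r, hr⟩ := M.exists_rotate_eq_row i
  rw [hr, List.length_rotate]

theorem lt_of_caLt {i j : Fin s.length} (h : caLt π (M.row i) (M.row j)) : i < j := by
  by_contra! hji
  rcases hji.lt_or_eq with hji | rfl
  · exact caLt_asymm h (M.sorted j i hji)
  · exact caLt_asymm h h

theorem row_injective : Function.Injective M.row := by
  intro i j h
  by_contra hij
  rcases lt_or_gt_of_ne hij with hij | hij
  · exact caLt_asymm (M.sorted i j hij) (h ▸ M.sorted i j hij)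
  · exact caLt_asymm (M.sorted j i hij) (h ▸ M.sorted j i hij)

theorem exists_row_eq_rshift (i : Fin s.length) : ∃ j, M.row j = rshift (M.row i) := by
  obtain ⟨r, hr⟩ := M.exists_rotate_eq_row i
  rw [hr, rshift_rotate]
  exact M.exists_row_eq_rotate (List.ne_nil_of_length_pos (Fin.pos i)) _

theorem exists_rshift_eq_row (j : Fin s.length) : ∃ i, rshift (M.row i) = M.row j := by
  have hs : s ≠ [] := List.ne_nil_of_length_pos (Fin.pos j)
  obtain ⟨r, hr⟩ := M.exists_rotate_eq_row j
  obtain ⟨i, hi⟩ := M.exists_row_eq_rotate hs (r + 1)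
  exact ⟨i, by rw [hi, hr, rshift_rotate_succ hs]⟩

noncomputable def lfMap (i : Fin s.length) : Fin s.length :=
  (M.exists_row_eq_rshift i).choose

theorem row_lfMap (i : Fin s.length) : M.row (M.lfMap i) = rshift (M.row i) :=
  (M.exists_row_eq_rshift i).choose_spec

end SortedRotMatrix

section Counting

theorem card_filter_le_image_eq {α β : Type*} [LinearOrder α] [LinearOrder β]
    {s : Finset α} {f : α → β} (hf : StrictMonoOn f s) {i : α} (hi : i ∈ s) :
    ((s.image f).filter (· ≤ f i)).card = (s.filter (· ≤ i)).card := by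
  have : (s.image f).filter (· ≤ f i) = (s.filter (· ≤ i)).image f := by
    ext y
    simp only [Finset.mem_filter, Finset.mem_image]
    constructor
    · rintro ⟨⟨x, hx, rfl⟩, hxi⟩
      exact ⟨x, ⟨hx, (hf.le_iff_le hx hi).1 hxi⟩, rfl⟩
    · rintro ⟨x, ⟨hx, hxi⟩, rfl⟩
      exact ⟨⟨x, hx, rfl⟩, (hf.le_iff_le hx hi).2 hxi⟩
  rw [this, Finset.card_image_of_injOn (hf.injOn.mono (Finset.filter_subset _ _))]

theorem Fin.val_add_one_eq_min'_add_card_filter_le {n : ℕ} {t : Finset (Fin n)}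
    (ht : (t : Set (Fin n)).OrdConnected) (hne : t.Nonempty) {j : Fin n} (hj : j ∈ t) :
    (j : ℕ) + 1 = (t.min' hne : ℕ) + (t.filter (· ≤ j)).card := by
  have : t.filter (· ≤ j) = Finset.Icc (t.min' hne) j := by
    ext x
    simp only [Finset.mem_filter, Finset.mem_Icc]
    exact ⟨fun ⟨hx, hxj⟩ => ⟨t.min'_le x hx, hxj⟩,
      fun hx => ⟨ht.out (t.min'_mem hne) hj hx, hx.2⟩⟩
  rw [this, Fin.card_Icc]
  have : (t.min' hne : ℕ) ≤ j := t.min'_le j hj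
  omega

end Counting

namespace SortedRotMatrix

variable {α : Type*} [DecidableEq α] {π : List α → LinearOrder α} {s : List α}

theorem mem_rng {M : SortedRotMatrix π s} {p : List α} {t : Fin s.length} :
    t ∈ Rng M p ↔ p <+: M.row t := by
  simp [Rng]

theorem ordConnected_rng (M : SortedRotMatrix π s) {p : List α} (hp : p.length ≤ s.length) :
    (Rng M p : Set (Fin s.length)).OrdConnected := by
  refine ⟨fun x hx y hy z ⟨hxz, hzy⟩ => ?_⟩
  rw [Finset.mem_coe, mem_rng] at hx hy ⊢
  rcases hxz.lt_or_eq with hxz | rfl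
  · rcases hzy.lt_or_eq with hzy | rfl
    · exact hx.of_caLt_of_caLt hy (M.length_row z ▸ hp) (M.sorted x z hxz) (M.sorted z y hzy)
    · exact hy
  · exact hx

variable {M : SortedRotMatrix π s}

theorem mem_filter_rng_singleton_iff (hs : 2 ≤ s.length) {a b : α} {l : Fin s.length} :
    l ∈ (Rng M [b]).filter (fun l => (M.row l).getLast? = some a) ↔
      ∃ v, M.row l = b :: v ++ [a] := by
  rw [Finset.mem_filter, mem_rng,
    List.singleton_prefix_and_getLast?_iff (M.length_row l ▸ hs)]

theorem lfMap_mem_rng_pair {a b : α} {l : Fin s.length} {v : List α}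
    (h : M.row l = b :: v ++ [a]) : M.lfMap l ∈ Rng M [a, b] := by
  rw [mem_rng, row_lfMap, h, rshift_append_singleton]
  exact ⟨v, rfl⟩

theorem strictMonoOn_lfMap (hloc : IsLocalOrdering π) (hs : 2 ≤ s.length) (a b : α) :
    StrictMonoOn M.lfMap ((Rng M [b]).filter (fun l => (M.row l).getLast? = some a) :
      Set (Fin s.length)) := by
  intro l hl l' hl' hll'
  obtain ⟨v, hv⟩ := (mem_filter_rng_singleton_iff hs).1 hl
  obtain ⟨v', hv'⟩ := (mem_filter_rng_singleton_iff hs).1 hl'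
  have hlen : (b :: v).length = (b :: v').length := by
    have := (M.length_row l).trans (M.length_row l').symm
    rw [hv, hv'] at this
    simpa using this
  apply M.lt_of_caLt
  rw [row_lfMap, row_lfMap, hv, hv', rshift_append_singleton, rshift_append_singleton]
  apply hloc.caLt_cons
  apply caLt_of_append_singleton hlen
  rw [← hv, ← hv']
  exact M.sorted l l' hll'

theorem image_lfMap (hs : 2 ≤ s.length) (a b : α) :
    ((Rng M [b]).filter (fun l => (M.row l).getLast? = some a)).image M.lfMap = Rng M [a, b] := by
  ext t
  rw [Finset.mem_image]
  constructor
  · rintro ⟨l, hl, rfl⟩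
    obtain ⟨v, hv⟩ := (mem_filter_rng_singleton_iff hs).1 hl
    exact lfMap_mem_rng_pair hv
  · intro ht
    obtain ⟨w, hw⟩ := mem_rng.1 ht
    obtain ⟨l, hl⟩ := M.exists_rshift_eq_row t
    have hrow : M.row l = b :: w ++ [a] :=
      eq_append_singleton_of_rshift_eq_cons (hl.trans hw.symm)
    exact ⟨l, (mem_filter_rng_singleton_iff hs).2 ⟨w, hrow⟩,
      M.row_injective ((M.row_lfMap l).trans hl)⟩

end SortedRotMatrix

open SortedRotMatrix in
theorem rshift_row_index_general {α : Type*} [DecidableEq α]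
    (π : List α → LinearOrder α) (hloc : IsLocalOrdering π)
    (s : List α) (hn : 2 ≤ s.length)
    (M : SortedRotMatrix π s) (i : Fin s.length) (x1 x2 : α)
    (hx2 : (M.row i).head? = some x2) (hx1 : (M.row i).getLast? = some x1) :
    ∃ (hne : (Rng M [x1, x2]).Nonempty) (j : Fin s.length),
      M.row j = rshift (M.row i) ∧
      (j : ℕ) + 1 = ((Rng M [x1, x2]).min' hne : ℕ)
        + ((Rng M [x2]).filter
            (fun l => l ≤ i ∧ (M.row l).getLast? = some x1)).card := by
  set S := (Rng M [x2]).filter (fun l => (M.row l).getLast? = some x1)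
  have hiS : i ∈ S :=
    Finset.mem_filter.2 ⟨mem_rng.2 (List.singleton_prefix_iff_head?_eq_some.2 hx2), hx1⟩
  have hlf : M.lfMap i ∈ Rng M [x1, x2] := image_lfMap hn x1 x2 ▸ Finset.mem_image_of_mem _ hiS
  refine ⟨⟨_, hlf⟩, M.lfMap i, M.row_lfMap i, ?_⟩
  have hS : (Rng M [x2]).filter (fun l => l ≤ i ∧ (M.row l).getLast? = some x1) =
      S.filter (· ≤ i) := by
    rw [Finset.filter_filter]
    simp only [and_comm]
  rw [hS, ← card_filter_le_image_eq (strictMonoOn_lfMap hloc hn x1 x2) hiS, image_lfMap hn]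
  exact Fin.val_add_one_eq_min'_add_card_filter_le (M.ordConnected_rng (p := [x1, x2]) hn) _ hlf

/-- LF-mapping for local orderings: for a row index `i` of `M*(s)` with first
symbol `x₂ = F[i]` and last symbol `x₁ = L[i]`, letting
`r = #{ j ≤ i : j ∈ Rng [x₂], L[j] = x₁ }` and `b = min (Rng [x₁x₂])`, the right
cyclic shift of row `i` is exactly row `b + r − 1` (written `j` with
`j + 1 = b + r`). -/
theorem rshift_row_index {α : Type*} [Fintype α] [Nonempty α] [DecidableEq α]
    (π : List α → LinearOrder α) (hloc : IsLocalOrdering π)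
    (s : List α) (hn : 2 ≤ s.length) (hp : IsPrimitive s)
    (M : SortedRotMatrix π s) (i : Fin s.length) (x1 x2 : α)
    (hx2 : (M.row i).head? = some x2) (hx1 : (M.row i).getLast? = some x1) :
    ∃ (hne : (Rng M [x1, x2]).Nonempty) (j : Fin s.length),
      M.row j = rshift (M.row i) ∧
      (j : ℕ) + 1 = ((Rng M [x1, x2]).min' hne : ℕ)
        + ((Rng M [x2]).filter
            (fun l => l ≤ i ∧ (M.row l).getLast? = some x1)).card :=
  rshift_row_index_general π hloc s hn M i x1 x2 hx2 hx1
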